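/- Fix I ∈ V and let u₀ ∈ L²(K_N) vanish μ-almost everywhere outside the ball B_I with ∫_{K_N} u₀ dμ = 0. Then the curve u : [0,∞) → L²(K_N), u(t) = e^{−γ_I t} u₀, solves the heat equation associated with 𝕃: u(0) = u₀ and for every t ≥ 0 the derivative of u at t (in the L²-norm) equals 𝕃(u(t)). -/

import Mathlib

open MeasureTheory Set
open scoped ENNReal NNReal

noncomputable section

/-- The closed ball `{x : ℚ_p | |x - I|_p ≤ p^(-N)}`. -/
def pBall (p : ℕ) [Fact p.Prime] (N : ℤ) (I : ℚ_[p]) : Set ℚ_[p] :=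
  {x : ℚ_[p] | ‖x - I‖ ≤ (p : ℝ) ^ (-N)}

/-- The indicator function of the ball `pBall p N I`, as a `ℂ`-valued function. -/
def indic (p : ℕ) [Fact p.Prime] (N : ℤ) (I : ℚ_[p]) : ℚ_[p] → ℂ :=
  (pBall p N I).indicator 1

/-- `K_N`, the disjoint union of the balls around the vertices. -/
def KN (p : ℕ) [Fact p.Prime] (N : ℤ) (V : Finset ℚ_[p]) : Set ℚ_[p] :=
  ⋃ I ∈ V, pBall p N I

/-- The kernel `A(x,y) = p^N ∑_{I,J ∈ V} A_{IJ} 1_{B_I}(x) 1_{B_J}(y)`. -/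
def zker (p : ℕ) [Fact p.Prime] (N : ℤ) (V : Finset ℚ_[p]) (A : ℚ_[p] → ℚ_[p] → ℂ)
    (x y : ℚ_[p]) : ℂ :=
  (p : ℂ) ^ N * ∑ I ∈ V, ∑ J ∈ V, A I J * indic p N I x * indic p N J y

/-- The degree `γ_I = ∑_{J ∈ V} A_{IJ}`. -/
def deg (p : ℕ) [Fact p.Prime] (V : Finset ℚ_[p]) (A : ℚ_[p] → ℚ_[p] → ℂ) (I : ℚ_[p]) : ℂ :=
  ∑ J ∈ V, A I J

/-- The degree function `γ(x) = ∑_{I ∈ V} γ_I 1_{B_I}(x)`. -/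
def degFun (p : ℕ) [Fact p.Prime] (N : ℤ) (V : Finset ℚ_[p]) (A : ℚ_[p] → ℚ_[p] → ℂ)
    (x : ℚ_[p]) : ℂ :=
  ∑ I ∈ V, deg p V A I * indic p N I x

/-- The Zúñiga operator `𝒜u(x) = ∫_{K_N} A(x,y) u(y) dμ(y)`. -/
def zop (p : ℕ) [Fact p.Prime] (N : ℤ) (V : Finset ℚ_[p]) (A : ℚ_[p] → ℚ_[p] → ℂ)
    [MeasurableSpace ℚ_[p]] (μ : Measure ℚ_[p]) (u : ℚ_[p] → ℂ) (x : ℚ_[p]) : ℂ :=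
  ∫ y in KN p N V, zker p N V A x y * u y ∂μ

/-- The Zúñiga Laplacian `𝕃u = 𝒜u - γ·u`. -/
def lapOp (p : ℕ) [Fact p.Prime] (N : ℤ) (V : Finset ℚ_[p]) (A : ℚ_[p] → ℚ_[p] → ℂ)
    [MeasurableSpace ℚ_[p]] (μ : Measure ℚ_[p]) (u : ℚ_[p] → ℂ) (x : ℚ_[p]) : ℂ :=
  zop p N V A μ u x - degFun p N V A x * u x

open scoped Classical in
/-- The kernel `L(x,y) = p^N ∑_{I,J ∈ V} (A_{IJ} - γ_I δ_{IJ}) 1_{B_I}(x) 1_{B_J}(y)`. -/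
def lker (p : ℕ) [Fact p.Prime] (N : ℤ) (V : Finset ℚ_[p]) (A : ℚ_[p] → ℚ_[p] → ℂ)
    (x y : ℚ_[p]) : ℂ :=
  (p : ℂ) ^ N * ∑ I ∈ V, ∑ J ∈ V,
    (A I J - if I = J then deg p V A I else 0) * indic p N I x * indic p N J y

/-- The integral operator `ℒu(x) = ∫_{K_N} L(x,y) u(y) dμ(y)`. -/
def lop (p : ℕ) [Fact p.Prime] (N : ℤ) (V : Finset ℚ_[p]) (A : ℚ_[p] → ℚ_[p] → ℂ)
    [MeasurableSpace ℚ_[p]] (μ : Measure ℚ_[p]) (u : ℚ_[p] → ℂ) (x : ℚ_[p]) : ℂ :=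
  ∫ y in KN p N V, lker p N V A x y * u y ∂μ

/-- Pairwise disjointness of the vertex balls. -/
def BallsDisjoint (p : ℕ) [Fact p.Prime] (N : ℤ) (V : Finset ℚ_[p]) : Prop :=
  (V : Set ℚ_[p]).Pairwise fun I J => Disjoint (pBall p N I) (pBall p N J)

/-!
The degree function is constant, equal to `γ_I`, on `B_I`, so `γ · u₀ = γ_I u₀`. The operator
`𝒜` only sees the integrals of its argument over the balls `B_J`; these all vanish for `u₀`,
over `B_I` because `u₀` vanishes off `B_I` and has integral zero, and over `B_J`, `J ≠ I`,
because `B_J` is disjoint from `B_I`. Hence `𝕃u₀ = -γ_I u₀`, and the curve `e^{-γ_I t} u₀`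
solves the heat equation.
-/

section Balls

variable {p : ℕ} [Fact p.Prime] {N : ℤ}

theorem pBall_eq_closedBall (I : ℚ_[p]) :
    pBall p N I = Metric.closedBall I ((p : ℝ) ^ (-N)) := by
  ext x
  simp [pBall, dist_eq_norm]

theorem isCompact_pBall (I : ℚ_[p]) : IsCompact (pBall p N I) := by
  rw [pBall_eq_closedBall]
  exact isCompact_closedBall I _

theorem isCompact_KN (V : Finset ℚ_[p]) : IsCompact (KN p N V) :=
  V.isCompact_biUnion fun I _ => isCompact_pBall I

theorem pBall_subset_KN {V : Finset ℚ_[p]} {I : ℚ_[p]} (hI : I ∈ V) :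
    pBall p N I ⊆ KN p N V :=
  subset_biUnion_of_mem (u := pBall p N) hI

theorem indic_mul (I : ℚ_[p]) (f : ℚ_[p] → ℂ) :
    (fun y => indic p N I y * f y) = (pBall p N I).indicator f := by
  ext y
  simp only [indic, ← indicator_mul_left, Pi.one_apply, one_mul]

theorem degFun_eq_deg_of_mem_pBall {V : Finset ℚ_[p]} (hdisj : BallsDisjoint p N V)
    (A : ℚ_[p] → ℚ_[p] → ℂ) {I x : ℚ_[p]} (hI : I ∈ V) (hx : x ∈ pBall p N I) :
    degFun p N V A x = deg p V A I := by
  rw [degFun, Finset.sum_eq_single_of_mem I hI]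
  · simp [indic, indicator_of_mem hx]
  · intro J hJ hJI
    have hxJ : x ∉ pBall p N J := fun hxJ => disjoint_left.1 (hdisj hJ hI hJI) hxJ hx
    simp [indic, indicator_of_notMem hxJ]

end Balls

section Integrals

variable {p : ℕ} [Fact p.Prime] {N : ℤ} {V : Finset ℚ_[p]}
  [MeasurableSpace ℚ_[p]] {μ : Measure ℚ_[p]}

theorem lapOp_congr_ae (A : ℚ_[p] → ℚ_[p] → ℂ) {f g : ℚ_[p] → ℂ}
    (h : f =ᵐ[μ.restrict (KN p N V)] g) :
    lapOp p N V A μ f =ᵐ[μ.restrict (KN p N V)] lapOp p N V A μ g := by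
  have hzop : zop p N V A μ f = zop p N V A μ g :=
    funext fun x => integral_congr_ae (h.mono fun y hy => by simp only [hy])
  filter_upwards [h] with x hx
  rw [lapOp, lapOp, hzop, hx]

variable [BorelSpace ℚ_[p]]

theorem measurableSet_pBall (I : ℚ_[p]) : MeasurableSet (pBall p N I) :=
  (isCompact_pBall I).isClosed.measurableSet

theorem measurableSet_KN : MeasurableSet (KN p N V) :=
  (isCompact_KN V).isClosed.measurableSet

theorem setIntegral_KN_indic_mul {I : ℚ_[p]} (hI : I ∈ V) (f : ℚ_[p] → ℂ) :
    ∫ y in KN p N V, indic p N I y * f y ∂μ = ∫ y in pBall p N I, f y ∂μ := by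
  rw [indic_mul, integral_indicator (measurableSet_pBall I),
    Measure.restrict_restrict (measurableSet_pBall I), inter_eq_left.2 (pBall_subset_KN hI)]

theorem zop_eq_sum (A : ℚ_[p] → ℚ_[p] → ℂ) {f : ℚ_[p] → ℂ}
    (hf : IntegrableOn f (KN p N V) μ) (x : ℚ_[p]) :
    zop p N V A μ f x = (p : ℂ) ^ N *
      ∑ I ∈ V, ∑ J ∈ V, A I J * indic p N I x * ∫ y in pBall p N J, f y ∂μ := by
  have hintegrable : ∀ J, Integrable (fun y => indic p N J y * f y) (μ.restrict (KN p N V)) :=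
    fun J => by rw [indic_mul]; exact hf.indicator (measurableSet_pBall J)
  have hsplit : ∀ y, zker p N V A x y * f y = ∑ I ∈ V, ∑ J ∈ V,
      (p : ℂ) ^ N * (A I J * indic p N I x) * (indic p N J y * f y) := by
    intro y
    simp only [zker, Finset.mul_sum, Finset.sum_mul]
    exact Finset.sum_congr rfl fun I _ => Finset.sum_congr rfl fun J _ => by ring
  simp only [zop, hsplit, Finset.mul_sum]
  rw [integral_finsetSum _ fun I _ => integrable_finsetSum _ fun J _ => (hintegrable J).const_mul _]
  refine Finset.sum_congr rfl fun I _ => ?_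
  rw [integral_finsetSum _ fun J _ => (hintegrable J).const_mul _]
  refine Finset.sum_congr rfl fun J hJ => ?_
  rw [integral_const_mul, setIntegral_KN_indic_mul hJ, mul_assoc]

theorem setIntegral_pBall_eq_zero (hdisj : BallsDisjoint p N V) {I J : ℚ_[p]}
    (hI : I ∈ V) (hJ : J ∈ V) {f : ℚ_[p] → ℂ}
    (hvanish : ∀ᵐ x ∂μ, x ∉ pBall p N I → f x = 0)
    (hint : ∫ x in KN p N V, f x ∂μ = 0) :
    ∫ x in pBall p N J, f x ∂μ = 0 := by
  by_cases hJI : J = I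
  · subst hJI
    rw [← hint]
    exact (setIntegral_eq_of_subset_of_ae_sdiff_eq_zero measurableSet_KN.nullMeasurableSet
      (pBall_subset_KN hJ) (hvanish.mono fun x hx hxK => hx hxK.2)).symm
  · exact setIntegral_eq_zero_of_ae_eq_zero
      (hvanish.mono fun x hx hxJ => hx (disjoint_left.1 (hdisj hJ hI hJI) hxJ))

theorem lapOp_ae_eq_neg_deg_mul (hdisj : BallsDisjoint p N V) (A : ℚ_[p] → ℚ_[p] → ℂ)
    {I : ℚ_[p]} (hI : I ∈ V) {f : ℚ_[p] → ℂ} (hf : IntegrableOn f (KN p N V) μ)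
    (hvanish : ∀ᵐ x ∂μ, x ∉ pBall p N I → f x = 0)
    (hint : ∫ x in KN p N V, f x ∂μ = 0) :
    ∀ᵐ x ∂μ, lapOp p N V A μ f x = -deg p V A I * f x := by
  have hzop : ∀ x, zop p N V A μ f x = 0 := fun x => by
    rw [zop_eq_sum A hf, Finset.sum_eq_zero fun I' _ => Finset.sum_eq_zero fun J hJ => by
      rw [setIntegral_pBall_eq_zero hdisj hI hJ hvanish hint, mul_zero], mul_zero]
  filter_upwards [hvanish] with x hx
  rw [lapOp, hzop]
  by_cases hxI : x ∈ pBall p N I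
  · rw [degFun_eq_deg_of_mem_pBall hdisj A hI hxI]
    ring
  · rw [hx hxI]
    ring

end Integrals

theorem hasDerivAt_cexp_mul_smul {E : Type*} [NormedAddCommGroup E] [NormedSpace ℂ E]
    (z : ℂ) (v : E) (t : ℝ) :
    HasDerivAt (fun s : ℝ => Complex.exp (z * s) • v) ((z * Complex.exp (z * t)) • v) t := by
  have hid : HasDerivAt (fun s : ℝ => (s : ℂ)) 1 t := by
    simpa using (hasDerivAt_id t).ofReal_comp
  simpa [mul_comm] using ((hid.const_mul z).cexp).smul_const v

theorem heat_solution_on_wavelet_part_general (p : ℕ) [Fact p.Prime]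
    [MeasurableSpace ℚ_[p]] [BorelSpace ℚ_[p]]
    (μ : Measure ℚ_[p]) [μ.IsAddHaarMeasure]
    (N : ℤ) (V : Finset ℚ_[p]) (hdisj : BallsDisjoint p N V)
    (A : ℚ_[p] → ℚ_[p] → ℂ)
    (I : ℚ_[p]) (hI : I ∈ V)
    (u₀ : ℚ_[p] → ℂ) (hu₀ : MemLp u₀ 2 (μ.restrict (KN p N V)))
    (hvanish : ∀ᵐ x ∂μ, x ∉ pBall p N I → u₀ x = 0)
    (hint : ∫ x in KN p N V, u₀ x ∂μ = 0)
    (u : ℝ → Lp ℂ 2 (μ.restrict (KN p N V)))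
    (hu : ∀ t : ℝ, u t = Complex.exp (-(deg p V A I) * (t : ℂ)) • hu₀.toLp u₀) :
    u 0 = hu₀.toLp u₀ ∧
    ∀ t : ℝ, 0 ≤ t → ∃ d : Lp ℂ 2 (μ.restrict (KN p N V)),
      HasDerivWithinAt u d (Set.Ici 0) t ∧
      ⇑d =ᵐ[μ.restrict (KN p N V)] lapOp p N V A μ ⇑(u t) := by
  refine ⟨by simp [hu], fun t _ => ?_⟩
  set c : ℂ := Complex.exp (-deg p V A I * t)
  have : IsFiniteMeasure (μ.restrict (KN p N V)) :=
    isFiniteMeasure_restrict.2 (isCompact_KN V).measure_lt_top.ne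
  have hu₀int : IntegrableOn u₀ (KN p N V) μ := hu₀.integrable one_le_two
  have hut : ⇑(u t) =ᵐ[μ.restrict (KN p N V)] fun x => c * u₀ x := by
    rw [hu t]
    filter_upwards [Lp.coeFn_smul c (hu₀.toLp u₀), hu₀.coeFn_toLp] with x h1 h2
    rw [h1, Pi.smul_apply, h2, smul_eq_mul]
  have heigen := lapOp_ae_eq_neg_deg_mul hdisj A hI (hu₀int.const_mul c)
    (hvanish.mono fun x hx hxI => by rw [hx hxI, mul_zero])
    (by rw [integral_const_mul, hint, mul_zero])
  refine ⟨(-deg p V A I * c) • hu₀.toLp u₀, ?_, ?_⟩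
  · rw [funext hu]
    exact (hasDerivAt_cexp_mul_smul _ _ t).hasDerivWithinAt
  · filter_upwards [Lp.coeFn_smul (-deg p V A I * c) (hu₀.toLp u₀), hu₀.coeFn_toLp,
      lapOp_congr_ae A hut, ae_restrict_of_ae heigen] with x h1 h2 h3 h4
    rw [h1, h3, h4, Pi.smul_apply, h2, smul_eq_mul, mul_assoc]

/-- Fix `I ∈ V` and let `u₀ ∈ L²(K_N)` vanish `μ`-a.e. outside `B_I`
with `∫_{K_N} u₀ dμ = 0`. Then `u(t) = e^{-γ_I t} u₀` solves the heat equation for `𝕃`: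
`u(0) = u₀` and for every `t ≥ 0` the derivative of `u` at `t` (in the `L²`-norm)
equals `𝕃(u(t))`. -/
theorem heat_solution_on_wavelet_part (p : ℕ) [Fact p.Prime]
    [MeasurableSpace ℚ_[p]] [BorelSpace ℚ_[p]]
    (μ : Measure ℚ_[p]) [μ.IsAddHaarMeasure]
    (hnorm : μ {x : ℚ_[p] | ‖x‖ ≤ 1} = 1)
    (N : ℤ) (V : Finset ℚ_[p]) (hdisj : BallsDisjoint p N V)
    (A : ℚ_[p] → ℚ_[p] → ℂ)
    (I : ℚ_[p]) (hI : I ∈ V)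
    (u₀ : ℚ_[p] → ℂ) (hu₀ : MemLp u₀ 2 (μ.restrict (KN p N V)))
    (hvanish : ∀ᵐ x ∂μ, x ∉ pBall p N I → u₀ x = 0)
    (hint : ∫ x in KN p N V, u₀ x ∂μ = 0)
    (u : ℝ → Lp ℂ 2 (μ.restrict (KN p N V)))
    (hu : ∀ t : ℝ, u t = Complex.exp (-(deg p V A I) * (t : ℂ)) • hu₀.toLp u₀) :
    u 0 = hu₀.toLp u₀ ∧
    ∀ t : ℝ, 0 ≤ t → ∃ d : Lp ℂ 2 (μ.restrict (KN p N V)),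
      HasDerivWithinAt u d (Set.Ici 0) t ∧
      ⇑d =ᵐ[μ.restrict (KN p N V)] lapOp p N V A μ ⇑(u t) :=
  heat_solution_on_wavelet_part_general p μ N V hdisj A I hI u₀ hu₀ hvanish hint u hu
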